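/- Let X ∈ ℝ^{n×p} and y ∈ ℝⁿ be such that the feasible set {(g,l) ∈ ℝ^p × ℝ^p : X(g∘l) = y} is nonempty. If (ḡ, l̄) minimizes ‖g‖² + ‖l‖² over this feasible set, then |ḡ_j| = |l̄_j| for every j = 1,…,p, and consequently ‖ḡ‖² + ‖l̄‖² = 2‖ḡ∘l̄‖₁. In particular, the minimum of ‖g‖² + ‖l‖² over {(g,l) : X(g∘l) = y} equals 2·min{‖β‖₁ : β ∈ ℝ^p, Xβ = y}. -/
import Mathlib


open MeasureTheory ProbabilityTheory Matrix Filter Topology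

noncomputable section

/-- Hadamard (entrywise) product of two vectors. -/
def had {p : ℕ} (u v : Fin p → ℝ) : Fin p → ℝ := fun j => u j * v j

/-- Euclidean norm of a vector. -/
def nrm2 {p : ℕ} (v : Fin p → ℝ) : ℝ := Real.sqrt (∑ j, (v j) ^ 2)

/-- ℓ1 norm of a vector. -/
def nrm1 {p : ℕ} (v : Fin p → ℝ) : ℝ := ∑ j, |v j|

/-- Sup norm of a vector. -/
def nrmInf {p : ℕ} (v : Fin p → ℝ) : ℝ := ⨆ j, |v j|

/-- A vector is `s`-sparse if it has at most `s` nonzero entries. -/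
def Sparse {p : ℕ} (s : ℕ) (v : Fin p → ℝ) : Prop := {j | v j ≠ 0}.ncard ≤ s

/-- The `(s, δ)`-Restricted Isometry Property:
`(1−δ)‖u‖² ≤ n⁻¹‖Xu‖² ≤ (1+δ)‖u‖²` for all `s`-sparse `u`. -/
def RIP {n p : ℕ} (X : Matrix (Fin n) (Fin p) ℝ) (s : ℕ) (δ : ℝ) : Prop :=
  ∀ u : Fin p → ℝ, Sparse s u →
    (1 - δ) * nrm2 u ^ 2 ≤ (n : ℝ)⁻¹ * nrm2 (X.mulVec u) ^ 2 ∧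
      (n : ℝ)⁻¹ * nrm2 (X.mulVec u) ^ 2 ≤ (1 + δ) * nrm2 u ^ 2

lemma nrm2_sq {p : ℕ} (v : Fin p → ℝ) : nrm2 v ^ 2 = ∑ j, (v j) ^ 2 :=
  Real.sq_sqrt (Finset.sum_nonneg fun j _ => sq_nonneg _)

lemma had_decomp {p : ℕ} (v : Fin p → ℝ) :
    had (fun j => Real.sqrt |v j|) (fun j => Real.sign (v j) * Real.sqrt |v j|) = v := by
  funext j
  simp only [had]
  rcases lt_trichotomy (v j) 0 with h | h | h
  · rw [Real.sign_of_neg h, abs_of_neg h,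
      show Real.sqrt (-v j) * (-1 * Real.sqrt (-v j)) = -(Real.sqrt (-v j) * Real.sqrt (-v j)) by
        ring, Real.mul_self_sqrt (by linarith)]
    ring
  · simp [h]
  · rw [Real.sign_of_pos h, abs_of_pos h, one_mul, Real.mul_self_sqrt h.le]

lemma sign_sqrt_sq (x : ℝ) : (Real.sign x * Real.sqrt |x|) ^ 2 = |x| := by
  rcases lt_trichotomy x 0 with h | h | h
  · rw [Real.sign_of_neg h]; rw [mul_pow, Real.sq_sqrt (abs_nonneg _)]; ring
  · simp [h]
  · rw [Real.sign_of_pos h]; rw [mul_pow, Real.sq_sqrt (abs_nonneg _)]; ring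

/-- If `(ḡ, l̄)` minimizes `‖g‖² + ‖l‖²` over the nonempty feasible set `{X(g∘l) = y}`, then
`|ḡ_j| = |l̄_j|` for every `j`, `‖ḡ‖² + ‖l̄‖² = 2‖ḡ∘l̄‖₁`, and this minimum value equals
`2·min{‖β‖₁ : Xβ = y}` (the ℓ1-minimum being attained). -/
theorem stmt17 (n p : ℕ) (X : Matrix (Fin n) (Fin p) ℝ) (y : Fin n → ℝ)
    (gbar lbar : Fin p → ℝ)
    (hfeas : X.mulVec (had gbar lbar) = y)
    (hmin : ∀ g l : Fin p → ℝ, X.mulVec (had g l) = y →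
      nrm2 gbar ^ 2 + nrm2 lbar ^ 2 ≤ nrm2 g ^ 2 + nrm2 l ^ 2) :
    (∀ j, |gbar j| = |lbar j|) ∧
    nrm2 gbar ^ 2 + nrm2 lbar ^ 2 = 2 * nrm1 (had gbar lbar) ∧
    ∃ βmin : Fin p → ℝ, X.mulVec βmin = y ∧
      (∀ β : Fin p → ℝ, X.mulVec β = y → nrm1 βmin ≤ nrm1 β) ∧
      nrm2 gbar ^ 2 + nrm2 lbar ^ 2 = 2 * nrm1 βmin := by
  have key : ∀ v : Fin p → ℝ, X.mulVec v = y →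
      nrm2 gbar ^ 2 + nrm2 lbar ^ 2 ≤ 2 * nrm1 v := by
    intro v hv
    have hle := hmin (fun j => Real.sqrt |v j|) (fun j => Real.sign (v j) * Real.sqrt |v j|)
      (by rw [had_decomp]; exact hv)
    calc nrm2 gbar ^ 2 + nrm2 lbar ^ 2 ≤ _ := hle
      _ = 2 * nrm1 v := by
          rw [nrm2_sq, nrm2_sq, nrm1, Finset.mul_sum, ← Finset.sum_add_distrib]
          apply Finset.sum_congr rfl
          intro j _
          rw [Real.sq_sqrt (abs_nonneg _), sign_sqrt_sq]
          ring
  have hA : nrm2 gbar ^ 2 + nrm2 lbar ^ 2 ≤ 2 * nrm1 (had gbar lbar) := key _ hfeas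
  have hpt : ∀ j, 2 * |had gbar lbar j| ≤ gbar j ^ 2 + lbar j ^ 2 := by
    intro j
    simp only [had]
    have := abs_mul (gbar j) (lbar j)
    nlinarith [sq_nonneg (|gbar j| - |lbar j|), sq_abs (gbar j), sq_abs (lbar j)]
  have hB : 2 * nrm1 (had gbar lbar) ≤ nrm2 gbar ^ 2 + nrm2 lbar ^ 2 := by
    rw [nrm2_sq, nrm2_sq, nrm1, Finset.mul_sum, ← Finset.sum_add_distrib]
    exact Finset.sum_le_sum fun j _ => hpt j
  have heq : nrm2 gbar ^ 2 + nrm2 lbar ^ 2 = 2 * nrm1 (had gbar lbar) := le_antisymm hA hB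
  have hpteq : ∀ j, 2 * |had gbar lbar j| = gbar j ^ 2 + lbar j ^ 2 := by
    have hsum : ∑ j, (gbar j ^ 2 + lbar j ^ 2) = ∑ j, 2 * |had gbar lbar j| := by
      rw [nrm2_sq, nrm2_sq, nrm1, Finset.mul_sum, ← Finset.sum_add_distrib] at heq
      exact heq
    intro j
    by_contra hne
    have hlt : 2 * |had gbar lbar j| < gbar j ^ 2 + lbar j ^ 2 := lt_of_le_of_ne (hpt j) hne
    have : ∑ i, 2 * |had gbar lbar i| < ∑ i, (gbar i ^ 2 + lbar i ^ 2) :=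
      Finset.sum_lt_sum (fun i _ => hpt i) ⟨j, Finset.mem_univ j, hlt⟩
    linarith [hsum]
  have habs : ∀ j, |gbar j| = |lbar j| := by
    intro j
    have h1 := hpteq j
    have h2 : |had gbar lbar j| = |gbar j| * |lbar j| := abs_mul _ _
    rw [h2] at h1
    nlinarith [sq_abs (gbar j), sq_abs (lbar j), abs_nonneg (gbar j), abs_nonneg (lbar j)]
  refine ⟨habs, heq, had gbar lbar, hfeas, ?_, heq⟩
  intro β hβ
  have := key β hβ
  linarith [heq]
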